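/- arXiv:1611.04003 — 4 statements merged into one kernel-verified Lean document; each statement's English description precedes it below -/
import Mathlib

section
/- Let (f_ω)_{ω∈Ω} be a uniformly good family of maps on X. Then there exist K>0 and ρ∈(0,1) such that for every n≥0, every ψ∈L^∞(X,m) and every φ∈BV(X,m), one has |∫ 𝓛_ω^{(n)}(φ h_ω) ψ dm − (∫ φ dμ_ω)·(∫ ψ dμ_{σ^n ω})| ≤ K ρ^n ‖ψ‖_∞ ‖φ‖_var for a.e. ω ∈ Ω. -/
open MeasureTheory Filter ENNReal

noncomputable section

namespace RandomASIP

variable {Ω X : Type*} [MeasurableSpace Ω] [MeasurableSpace X]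

/-- The iterated maps `f_ω^n = f_{σ^{n-1}ω} ∘ ⋯ ∘ f_ω`. -/
def fIter (σ : Ω → Ω) (f : Ω → X → X) (ω : Ω) : ℕ → X → X
  | 0 => id
  | n + 1 => f (σ^[n] ω) ∘ fIter σ f ω n

/-- The iterated transfer operators `𝓛_ω^{(n)} = 𝓛_{σ^{n-1}ω} ∘ ⋯ ∘ 𝓛_ω`. -/
def Lit (σ : Ω → Ω) (L : Ω → (X → ℝ) → X → ℝ) (ω : Ω) : ℕ → (X → ℝ) → X → ℝ
  | 0 => fun φ => φ
  | n + 1 => fun φ => L (σ^[n] ω) (Lit σ L ω n φ)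

/-- The BV norm `‖φ‖_BV = var(φ) + ‖φ‖₁`. -/
def bvNorm (m : Measure X) (var : (X → ℝ) → ℝ≥0∞) (φ : X → ℝ) : ℝ≥0∞ :=
  var φ + eLpNorm φ 1 m

/-- The norm `‖φ‖_var = var(φ) + ‖φ‖_∞`. -/
def varNorm (m : Measure X) (var : (X → ℝ) → ℝ≥0∞) (φ : X → ℝ) : ℝ≥0∞ :=
  var φ + eLpNorm φ ∞ m

/-- Membership in `BV = {φ ∈ L¹(m) : var(φ) < ∞}`. -/
def MemBV (m : Measure X) (var : (X → ℝ) → ℝ≥0∞) (φ : X → ℝ) : Prop :=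
  Integrable φ m ∧ var φ < ∞

/-- The cone `C_a = {φ ∈ BV : φ ≥ 0 and var(φ) ≤ a ∫ φ dm}`. -/
def coneC (m : Measure X) (var : (X → ℝ) → ℝ≥0∞) (a : ℝ) : Set (X → ℝ) :=
  {φ | MemBV m var φ ∧ 0 ≤ᵐ[m] φ ∧ var φ ≤ ENNReal.ofReal (a * ∫ x, φ x ∂m)}

/-- Conditions (V1)–(V8) on the abstract variation functional. -/
structure VariationGood (m : Measure X) (var : (X → ℝ) → ℝ≥0∞) : Prop where
  /-- (V1) -/
  v1 : ∀ (t : ℝ) (h : X → ℝ), var (fun x => t * h x) = ENNReal.ofReal |t| * var h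
  /-- (V2) -/
  v2 : ∀ g h : X → ℝ, var (g + h) ≤ var g + var h
  /-- (V3) -/
  v3 : ∃ Cvar : ℝ, 1 ≤ Cvar ∧ ∀ h : X → ℝ,
        eLpNorm h ∞ m ≤ ENNReal.ofReal Cvar * (eLpNorm h 1 m + var h)
  /-- (V4): `L¹(m)`-compactness of BV-balls, in sequential form -/
  v4 : ∀ C : ℝ≥0∞, ∀ g : ℕ → X → ℝ, (∀ n, eLpNorm (g n) 1 m + var (g n) ≤ C) →
        ∃ (ns : ℕ → ℕ) (φ : X → ℝ), StrictMono ns ∧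
          Tendsto (fun k => eLpNorm (g (ns k) - φ) 1 m) atTop (nhds 0)
  /-- (V5) -/
  v5 : var (fun _ => (1 : ℝ)) < ∞
  /-- (V6) -/
  v6 : ∀ h : X → ℝ, 0 ≤ᵐ[m] h → eLpNorm h 1 m = 1 → ∀ ε : ℝ≥0∞, 0 < ε →
        ∃ g : X → ℝ, 0 ≤ᵐ[m] g ∧ eLpNorm g 1 m = 1 ∧ var g < ∞ ∧ eLpNorm (h - g) 1 m < ε
  /-- (V7) -/
  v7 : ∃ Kvar : ℝ≥0∞, Kvar < ∞ ∧ ∀ g h : X → ℝ,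
        var (g * h) + eLpNorm (g * h) 1 m ≤
          Kvar * (var h + eLpNorm h 1 m) * (var g + eLpNorm g 1 m)
  /-- (V8) -/
  v8 : ∀ g : X → ℝ, 0 < essInf g m →
        var (fun x => 1 / g x) ≤ var g / ENNReal.ofReal (essInf g m) ^ 2

/-- The hypotheses on the random dynamical system: `σ` is an invertible ergodic
measure-preserving map, the `𝓛_ω` are the transfer operators of the `f_ω`, and
the uniformly good conditions (H1)–(H5) hold. -/
structure UniformlyGood (P : Measure Ω) (σ : Ω → Ω) (m : Measure X)
    (var : (X → ℝ) → ℝ≥0∞) (f : Ω → X → X) (L : Ω → (X → ℝ) → X → ℝ) : Prop where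
  sigma_bij : Function.Bijective σ
  sigma_pres : MeasurePreserving σ P P
  sigma_erg : Ergodic σ P
  f_meas : ∀ ω, Measurable (f ω)
  /-- `𝓛_ω` descends to `L¹(m)` -/
  L_congr : ∀ ω (φ₁ φ₂ : X → ℝ), φ₁ =ᵐ[m] φ₂ → L ω φ₁ =ᵐ[m] L ω φ₂
  L_int : ∀ ω (φ : X → ℝ), Integrable φ m → Integrable (L ω φ) m
  /-- the duality relation defining the transfer operator `𝓛_ω` -/
  duality : ∀ ω (φ ψ : X → ℝ), Integrable φ m → Measurable ψ → (∃ c : ℝ, ∀ x, |ψ x| ≤ c) →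
      ∫ x, L ω φ x * ψ x ∂m = ∫ x, φ x * ψ (f ω x) ∂m
  /-- (H1) -/
  h1 : ∀ H : Ω → X → ℝ, Measurable (Function.uncurry H) →
      Measurable fun p : Ω × X => L p.1 (H p.1) p.2
  /-- (H2) -/
  h2 : ∃ C : ℝ, 0 < C ∧ ∀ᵐ ω ∂P, ∀ φ : X → ℝ,
      bvNorm m var (L ω φ) ≤ ENNReal.ofReal C * bvNorm m var φ
  /-- (H3) -/
  h3 : ∀ᵐ ω ∂P, ∃ B : ℝ≥0∞, B < ∞ ∧ ∀ (n : ℕ) (φ : X → ℝ), bvNorm m var φ ≤ 1 →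
      bvNorm m var (φ ∘ f (σ^[n] ω)) ≤ B
  /-- (H4) -/
  h4 : ∃ N : ℕ, 0 < N ∧ ∀ a : ℝ, 0 < a → ∃ n₀ : ℕ, ∀ n, n₀ ≤ n → ∃ c : ℝ, 0 < c ∧
      ∀ᵐ ω ∂P, ∀ g ∈ coneC m var a,
        c / 2 * ∫ x, |g x| ∂m ≤ essInf (Lit σ L ω (N * n) g) m
  /-- (H5) -/
  h5 : ∃ K lam : ℝ, 0 < K ∧ 0 < lam ∧ ∀ᵐ ω ∂P, ∀ (n : ℕ) (φ : X → ℝ), MemBV m var φ →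
      (∫ x, φ x ∂m) = 0 →
      bvNorm m var (Lit σ L ω n φ) ≤ ENNReal.ofReal (K * Real.exp (-lam * n)) * bvNorm m var φ

/-- The properties of the unique random absolutely continuous invariant density `h`. -/
structure IsACIM (P : Measure Ω) (σ : Ω → Ω) (m : Measure X)
    (var : (X → ℝ) → ℝ≥0∞) (L : Ω → (X → ℝ) → X → ℝ) (h : Ω → X → ℝ) : Prop where
  meas : Measurable (Function.uncurry h)
  nonneg : ∀ ω x, 0 ≤ h ω x
  mem_bv : ∀ᵐ ω ∂P, MemBV m var (h ω)
  mass : ∀ᵐ ω ∂P, (∫ x, h ω x ∂m) = 1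
  equiv : ∀ᵐ ω ∂P, L ω (h ω) =ᵐ[m] h (σ ω)
  bdd : ∃ B : ℝ≥0∞, B < ∞ ∧ ∀ᵐ ω ∂P, bvNorm m var (h ω) ≤ B

/-- The fibered measure `μ_ω` with `dμ_ω = h_ω dm`. -/
def muOmega (m : Measure X) (h : Ω → X → ℝ) (ω : Ω) : Measure X :=
  m.withDensity fun x => ENNReal.ofReal (h ω x)

/-- The skew product `τ(ω,x) = (σ ω, f_ω x)`. -/
def tau (σ : Ω → Ω) (f : Ω → X → X) : Ω × X → Ω × X :=
  fun p => (σ p.1, f p.1 p.2)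

/-- The invariant measure `μ` of the skew product, `dμ = h d(ℙ × m)`. -/
def muProd (P : Measure Ω) (m : Measure X) (h : Ω → X → ℝ) : Measure (Ω × X) :=
  (P.prod m).withDensity fun p => ENNReal.ofReal (h p.1 p.2)

/-- The centered observable `ψ̃_ω = ψ_ω − ∫ ψ_ω dμ_ω`. -/
def centered (m : Measure X) (h : Ω → X → ℝ) (ψ : Ω → X → ℝ) (ω : Ω) : X → ℝ :=
  fun x => ψ ω x - ∫ y, ψ ω y ∂(muOmega m h ω)

/-- The functions `G_k` of the martingale decomposition: `G₀ = 0` and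
`G_{k+1} = 𝓛_{σ^k ω}(ψ̃_{σ^k ω} h_{σ^k ω} + G_k h_{σ^k ω}) / h_{σ^{k+1} ω}`. -/
def Gseq (σ : Ω → Ω) (L : Ω → (X → ℝ) → X → ℝ) (h ψt : Ω → X → ℝ) (ω : Ω) : ℕ → X → ℝ
  | 0 => 0
  | k + 1 => fun x =>
      L (σ^[k] ω) (fun y => ψt (σ^[k] ω) y * h (σ^[k] ω) y + Gseq σ L h ψt ω k y * h (σ^[k] ω) y) x /
        h (σ^[k + 1] ω) x

/-- `M_n = ψ̃_{σ^n ω} + G_n − G_{n+1} ∘ f_{σ^n ω}`. -/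
def Mseq (σ : Ω → Ω) (f : Ω → X → X) (L : Ω → (X → ℝ) → X → ℝ)
    (h ψt : Ω → X → ℝ) (ω : Ω) (n : ℕ) : X → ℝ :=
  fun x => ψt (σ^[n] ω) x + Gseq σ L h ψt ω n x - Gseq σ L h ψt ω (n + 1) (f (σ^[n] ω) x)

/-- The σ-algebra `𝓣_ω^n = (f_ω^n)⁻¹(𝓑)`. -/
def Talg (σ : Ω → Ω) (f : Ω → X → X) (ω : Ω) (n : ℕ) : MeasurableSpace X :=
  MeasurableSpace.comap (fIter σ f ω n) inferInstance

end RandomASIP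

namespace RandomASIP

/-! Write `c = ∫ φ dμ_ω` and `g = φ h_ω - c h_ω`. Then `g` has mean zero and
`‖g‖_BV ≲ ‖h_ω‖_BV ‖φ‖_var` by (V1), (V2), (V7), while `𝓛_ω^{(n)} h_ω = h_{σⁿω}` by invariance.
By duality `∫ 𝓛_ω^{(n)}(φ h_ω) ψ dm = ∫ 𝓛_ω^{(n)} g ψ dm + c ∫ ψ dμ_{σⁿω}`, and the remaining term
is at most `‖𝓛_ω^{(n)} g‖₁ ‖ψ‖_∞`, which decays exponentially by (H5). -/

section Iterates

variable {Ω X : Type*} [MeasurableSpace X] {m : Measure X}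
  {σ : Ω → Ω} {f : Ω → X → X} {L : Ω → (X → ℝ) → X → ℝ}

theorem fIter_measurable (hf : ∀ ω, Measurable (f ω)) (ω : Ω) :
    ∀ n, Measurable (fIter σ f ω n)
  | 0 => measurable_id
  | n + 1 => (hf _).comp (fIter_measurable hf ω n)

theorem Lit_integrable (hL : ∀ ω φ, Integrable φ m → Integrable (L ω φ) m) (ω : Ω)
    {u : X → ℝ} (hu : Integrable u m) : ∀ n, Integrable (Lit σ L ω n u) m
  | 0 => hu
  | n + 1 => hL _ _ (Lit_integrable hL ω hu n)

theorem Lit_ae_eq_of_forall_ae_eq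
    (hL_congr : ∀ ω (φ₁ φ₂ : X → ℝ), φ₁ =ᵐ[m] φ₂ → L ω φ₁ =ᵐ[m] L ω φ₂)
    {ρ : Ω → X → ℝ} {ω : Ω}
    (hρ : ∀ k, L (σ^[k] ω) (ρ (σ^[k] ω)) =ᵐ[m] ρ (σ^[k + 1] ω)) :
    ∀ n, Lit σ L ω n (ρ ω) =ᵐ[m] ρ (σ^[n] ω)
  | 0 => .rfl
  | n + 1 => (hL_congr _ _ _ (Lit_ae_eq_of_forall_ae_eq hL_congr hρ n)).trans (hρ n)

theorem ae_forall_Lit_ae_eq [MeasurableSpace Ω] {P : Measure Ω} (hσ : MeasurePreserving σ P P)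
    (hL_congr : ∀ ω (φ₁ φ₂ : X → ℝ), φ₁ =ᵐ[m] φ₂ → L ω φ₁ =ᵐ[m] L ω φ₂) {ρ : Ω → X → ℝ}
    (hρ : ∀ᵐ ω ∂P, L ω (ρ ω) =ᵐ[m] ρ (σ ω)) :
    ∀ᵐ ω ∂P, ∀ n, Lit σ L ω n (ρ ω) =ᵐ[m] ρ (σ^[n] ω) := by
  have hρ_iter : ∀ᵐ ω ∂P, ∀ k, L (σ^[k] ω) (ρ (σ^[k] ω)) =ᵐ[m] ρ (σ^[k + 1] ω) := by
    refine ae_all_iff.2 fun k => ?_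
    filter_upwards [(hσ.iterate k).quasiMeasurePreserving.ae hρ] with ω hω
    rwa [Function.iterate_succ_apply']
  filter_upwards [hρ_iter] with ω hω
  exact Lit_ae_eq_of_forall_ae_eq hL_congr hω

theorem integral_Lit_mul (hf : ∀ ω, Measurable (f ω))
    (hL : ∀ ω φ, Integrable φ m → Integrable (L ω φ) m)
    (hdual : ∀ ω (φ ψ : X → ℝ), Integrable φ m → Measurable ψ → (∃ c : ℝ, ∀ x, |ψ x| ≤ c) →
      ∫ x, L ω φ x * ψ x ∂m = ∫ x, φ x * ψ (f ω x) ∂m)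
    (ω : Ω) {u : X → ℝ} (hu : Integrable u m) :
    ∀ (n : ℕ) {ψ : X → ℝ}, Measurable ψ → (∃ c : ℝ, ∀ x, |ψ x| ≤ c) →
      ∫ x, Lit σ L ω n u x * ψ x ∂m = ∫ x, u x * ψ (fIter σ f ω n x) ∂m
  | 0, _, _, _ => rfl
  | n + 1, ψ, hψ, ⟨c, hc⟩ => by
    rw [Lit, hdual _ _ ψ (Lit_integrable hL ω hu n) hψ ⟨c, hc⟩]
    exact integral_Lit_mul hf hL hdual ω hu n (ψ := fun x => ψ (f (σ^[n] ω) x))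
      (hψ.comp (hf _)) ⟨c, fun x => hc _⟩

/-- `𝓛_ω^{(n)}` need not be linear pointwise, but it is linear against bounded test functions. -/
theorem integral_Lit_add_mul_mul (hf : ∀ ω, Measurable (f ω))
    (hL : ∀ ω φ, Integrable φ m → Integrable (L ω φ) m)
    (hdual : ∀ ω (φ ψ : X → ℝ), Integrable φ m → Measurable ψ → (∃ c : ℝ, ∀ x, |ψ x| ≤ c) →
      ∫ x, L ω φ x * ψ x ∂m = ∫ x, φ x * ψ (f ω x) ∂m)
    (ω : Ω) (n : ℕ) {u v ψ : X → ℝ} (c : ℝ) (hu : Integrable u m) (hv : Integrable v m)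
    (hψ : Measurable ψ) {b : ℝ} (hψb : ∀ x, |ψ x| ≤ b) :
    ∫ x, Lit σ L ω n (fun y => u y + c * v y) x * ψ x ∂m =
      ∫ x, Lit σ L ω n u x * ψ x ∂m + c * ∫ x, Lit σ L ω n v x * ψ x ∂m := by
  have hψF_bdd : ∀ᵐ x ∂m, ‖ψ (fIter σ f ω n x)‖ ≤ b := .of_forall fun x => hψb _
  have hψF : AEStronglyMeasurable (fun x => ψ (fIter σ f ω n x)) m :=
    (hψ.comp (fIter_measurable hf ω n)).aestronglyMeasurable
  rw [integral_Lit_mul hf hL hdual ω (u := fun y => u y + c * v y) (hu.add (hv.const_mul c)) n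
      hψ ⟨b, hψb⟩, integral_Lit_mul hf hL hdual ω hu n hψ ⟨b, hψb⟩,
    integral_Lit_mul hf hL hdual ω hv n hψ ⟨b, hψb⟩]
  simp only [add_mul, mul_assoc]
  rw [integral_add (hu.mul_bdd hψF hψF_bdd) ((hv.mul_bdd hψF hψF_bdd).const_mul c),
    integral_const_mul]

end Iterates

section Norms

variable {X : Type*} [MeasurableSpace X] {m : Measure X}

theorem enorm_integral_mul_le {u : X → ℝ} (hu : AEStronglyMeasurable u m) (v : X → ℝ) :
    ‖∫ x, u x * v x ∂m‖ₑ ≤ eLpNorm u 1 m * eLpNorm v ∞ m :=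
  calc ‖∫ x, u x * v x ∂m‖ₑ ≤ ∫⁻ x, ‖u x * v x‖ₑ ∂m := enorm_integral_le_lintegral_enorm _
    _ = eLpNorm (u • v) 1 m := eLpNorm_one_eq_lintegral_enorm.symm
    _ ≤ eLpNorm u 1 m * eLpNorm v ∞ m := eLpNorm_smul_le_eLpNorm_mul_eLpNorm_top 1 v hu

theorem ae_abs_le_toReal_eLpNorm_top {ψ : X → ℝ} (hψ : eLpNorm ψ ∞ m ≠ ∞) :
    ∀ᵐ x ∂m, |ψ x| ≤ (eLpNorm ψ ∞ m).toReal := by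
  rw [eLpNorm_exponent_top] at hψ ⊢
  filter_upwards [ae_le_eLpNormEssSup (f := ψ) (μ := m)] with x hx
  rw [← Real.norm_eq_abs, ← toReal_enorm]
  exact ENNReal.toReal_mono hψ hx

/-- The duality relation only accepts everywhere bounded test functions; clipping `ψ` at
`±‖ψ‖_∞` gives such a version of it. -/
theorem exists_measurable_abs_le_ae_eq {ψ : X → ℝ} (hψ : Measurable ψ)
    (hψ_top : eLpNorm ψ ∞ m ≠ ∞) :
    ∃ ψ' : X → ℝ, Measurable ψ' ∧ (∀ x, |ψ' x| ≤ (eLpNorm ψ ∞ m).toReal) ∧ ψ' =ᵐ[m] ψ := by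
  set b := (eLpNorm ψ ∞ m).toReal
  refine ⟨fun x => max (-b) (min b (ψ x)), measurable_const.max (measurable_const.min hψ),
    fun x => abs_le.2 ⟨le_max_left _ _, max_le (by simp [b]) (min_le_left _ _)⟩, ?_⟩
  filter_upwards [ae_abs_le_toReal_eLpNorm_top hψ_top] with x hx
  rw [abs_le] at hx
  rw [min_eq_right hx.2, max_eq_right hx.1]

theorem eLpNorm_one_eq_one_of_integral_eq_one {ρ : X → ℝ} (hρ : Integrable ρ m)
    (hρ0 : 0 ≤ᵐ[m] ρ) (hρ1 : ∫ x, ρ x ∂m = 1) : eLpNorm ρ 1 m = 1 := by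
  rw [eLpNorm_one_eq_lintegral_enorm, ← ofReal_integral_norm_eq_lintegral_enorm hρ,
    integral_congr_ae (hρ0.mono fun x hx => Real.norm_of_nonneg hx), hρ1, ENNReal.ofReal_one]

theorem integral_muOmega {Ω : Type*} {h : Ω → X → ℝ} {ω : Ω} (hm : Measurable (h ω))
    (h0 : ∀ x, 0 ≤ h ω x) (u : X → ℝ) :
    ∫ x, u x ∂muOmega m h ω = ∫ x, h ω x * u x ∂m := by
  rw [muOmega, integral_withDensity_eq_integral_toReal_smul hm.ennreal_ofReal
    (.of_forall fun _ => ENNReal.ofReal_lt_top)]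
  simp only [ENNReal.toReal_ofReal (h0 _), smul_eq_mul]

end Norms

section Variation

variable {X : Type*} [MeasurableSpace X] {m : Measure X} {var : (X → ℝ) → ℝ≥0∞}

theorem MemBV.eLpNorm_top_lt_top (hvar : VariationGood m var) {φ : X → ℝ}
    (hφ : MemBV m var φ) : eLpNorm φ ∞ m < ∞ := by
  obtain ⟨Cvar, -, hCvar⟩ := hvar.v3
  exact (hCvar φ).trans_lt <| ENNReal.mul_lt_top ENNReal.ofReal_lt_top
    (ENNReal.add_lt_top.2 ⟨(memLp_one_iff_integrable.2 hφ.1).eLpNorm_lt_top, hφ.2⟩)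

theorem bvNorm_le_varNorm [IsProbabilityMeasure m] {φ : X → ℝ}
    (hφ : AEStronglyMeasurable φ m) : bvNorm m var φ ≤ varNorm m var φ :=
  add_le_add le_rfl (eLpNorm_le_eLpNorm_of_exponent_le le_top hφ)

theorem bvNorm_mul_sub_mul_le [IsProbabilityMeasure m] (hvar : VariationGood m var)
    {Kvar : ℝ≥0∞} (hKvar : ∀ g h : X → ℝ, var (g * h) + eLpNorm (g * h) 1 m ≤
      Kvar * (var h + eLpNorm h 1 m) * (var g + eLpNorm g 1 m))
    {φ ρ : X → ℝ} (hφ : AEStronglyMeasurable φ m) (hρ : AEStronglyMeasurable ρ m) {c : ℝ}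
    (hc : ENNReal.ofReal |c| ≤ eLpNorm φ ∞ m) :
    bvNorm m var (fun y => φ y * ρ y - c * ρ y) ≤
      (Kvar + 1) * bvNorm m var ρ * varNorm m var φ := by
  have hsplit : (fun y => φ y * ρ y - c * ρ y) = φ * ρ + fun y => (-c) * ρ y := by
    ext y; simp only [Pi.add_apply, Pi.mul_apply]; ring
  have hvar_le : var (φ * ρ + fun y => (-c) * ρ y) ≤ var (φ * ρ) + ENNReal.ofReal |c| * var ρ := by
    grw [hvar.v2, hvar.v1, abs_neg]
  have hL1_le : eLpNorm (φ * ρ + fun y => (-c) * ρ y) 1 m ≤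
      eLpNorm (φ * ρ) 1 m + ENNReal.ofReal |c| * eLpNorm ρ 1 m := by
    grw [eLpNorm_add_le (hφ.mul hρ) (hρ.const_mul _) le_rfl]
    change _ + eLpNorm ((-c) • ρ) 1 m ≤ _
    rw [eLpNorm_const_smul, Real.enorm_eq_ofReal_abs, abs_neg]
  calc bvNorm m var (fun y => φ y * ρ y - c * ρ y)
      ≤ (var (φ * ρ) + eLpNorm (φ * ρ) 1 m) + ENNReal.ofReal |c| * bvNorm m var ρ := by
        rw [bvNorm, hsplit, bvNorm, mul_add]
        grw [hvar_le, hL1_le]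
        exact le_of_eq (by ring)
    _ ≤ Kvar * bvNorm m var ρ * bvNorm m var φ + varNorm m var φ * bvNorm m var ρ := by
        grw [hKvar, hc]
        exact add_le_add le_rfl (mul_le_mul_left le_add_self _)
    _ ≤ (Kvar + 1) * bvNorm m var ρ * varNorm m var φ := by
        grw [bvNorm_le_varNorm hφ]
        exact le_of_eq (by ring)

end Variation

section Decay

variable {Ω X : Type*} [MeasurableSpace X] {m : Measure X} [IsProbabilityMeasure m]
  {var : (X → ℝ) → ℝ≥0∞} {σ : Ω → Ω} {f : Ω → X → X} {L : Ω → (X → ℝ) → X → ℝ}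

theorem enorm_integral_Lit_mul_sub_le (hf : ∀ ω, Measurable (f ω))
    (hL : ∀ ω φ, Integrable φ m → Integrable (L ω φ) m)
    (hdual : ∀ ω (φ ψ : X → ℝ), Integrable φ m → Measurable ψ → (∃ c : ℝ, ∀ x, |ψ x| ≤ c) →
      ∫ x, L ω φ x * ψ x ∂m = ∫ x, φ x * ψ (f ω x) ∂m)
    (hvar : VariationGood m var) {Kvar : ℝ≥0∞} (hKvar_lt : Kvar < ∞)
    (hKvar : ∀ g h : X → ℝ, var (g * h) + eLpNorm (g * h) 1 m ≤
      Kvar * (var h + eLpNorm h 1 m) * (var g + eLpNorm g 1 m))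
    {ω : Ω} {n : ℕ} {a : ℝ}
    (hdecay : ∀ g : X → ℝ, MemBV m var g → ∫ x, g x ∂m = 0 →
      bvNorm m var (Lit σ L ω n g) ≤ ENNReal.ofReal a * bvNorm m var g)
    {ρ ρ' : X → ℝ} (hρ : MemBV m var ρ) (hρ0 : 0 ≤ᵐ[m] ρ) (hρ1 : ∫ x, ρ x ∂m = 1)
    (hρ' : Lit σ L ω n ρ =ᵐ[m] ρ') {φ ψ : X → ℝ} (hφ : MemBV m var φ) (hψ : Measurable ψ)
    {b : ℝ} (hψb : ∀ x, |ψ x| ≤ b) :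
    ‖∫ x, Lit σ L ω n (fun y => φ y * ρ y) x * ψ x ∂m -
        (∫ x, ρ x * φ x ∂m) * ∫ x, ρ' x * ψ x ∂m‖ₑ ≤
      ENNReal.ofReal a * ((Kvar + 1) * bvNorm m var ρ * varNorm m var φ) * eLpNorm ψ ∞ m := by
  set c := ∫ x, ρ x * φ x ∂m
  set g : X → ℝ := fun y => φ y * ρ y - c * ρ y
  have hφ_top := hφ.eLpNorm_top_lt_top hvar
  have hφρ : Integrable (fun y => φ y * ρ y) m := hρ.1.mul_of_top_right ⟨hφ.1.1, hφ_top⟩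
  have hg_int : Integrable g m := hφρ.sub (hρ.1.const_mul c)
  have hc : ENNReal.ofReal |c| ≤ eLpNorm φ ∞ m := by
    grw [← Real.enorm_eq_ofReal_abs, enorm_integral_mul_le hρ.1.1,
      eLpNorm_one_eq_one_of_integral_eq_one hρ.1 hρ0 hρ1, one_mul]
  have hg_bv : bvNorm m var g ≤ (Kvar + 1) * bvNorm m var ρ * varNorm m var φ :=
    bvNorm_mul_sub_mul_le hvar hKvar hφ.1.1 hρ.1.1 hc
  have hg : MemBV m var g := by
    refine ⟨hg_int, (le_add_right le_rfl).trans_lt (hg_bv.trans_lt ?_)⟩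
    have hρ_bv : bvNorm m var ρ < ∞ :=
      ENNReal.add_lt_top.2 ⟨hρ.2, (memLp_one_iff_integrable.2 hρ.1).eLpNorm_lt_top⟩
    have hφ_var : varNorm m var φ < ∞ := ENNReal.add_lt_top.2 ⟨hφ.2, hφ_top⟩
    have hKvar_one : Kvar + 1 < ∞ := ENNReal.add_lt_top.2 ⟨hKvar_lt, ENNReal.one_lt_top⟩
    exact ENNReal.mul_lt_top (ENNReal.mul_lt_top hKvar_one hρ_bv) hφ_var
  have hg_mean : ∫ x, g x ∂m = 0 := by
    change ∫ x, (φ x * ρ x - c * ρ x) ∂m = 0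
    rw [integral_sub hφρ (hρ.1.const_mul c), integral_const_mul, hρ1, mul_one, sub_eq_zero]
    exact integral_congr_ae (.of_forall fun x => mul_comm _ _)
  have hsplit : ∫ x, Lit σ L ω n (fun y => φ y * ρ y) x * ψ x ∂m =
      ∫ x, Lit σ L ω n g x * ψ x ∂m + c * ∫ x, ρ' x * ψ x ∂m := by
    have hφρ_eq : (fun y => φ y * ρ y) = fun y => g y + c * ρ y := by
      ext y; simp only [g, sub_add_cancel]
    rw [hφρ_eq, integral_Lit_add_mul_mul hf hL hdual ω n c hg_int hρ.1 hψ hψb]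
    congr 2
    exact integral_congr_ae (hρ'.mono fun x hx => congrArg (· * ψ x) hx)
  rw [hsplit, add_sub_cancel_right]
  calc ‖∫ x, Lit σ L ω n g x * ψ x ∂m‖ₑ
      ≤ eLpNorm (Lit σ L ω n g) 1 m * eLpNorm ψ ∞ m :=
        enorm_integral_mul_le (Lit_integrable hL ω hg_int n).1 ψ
    _ ≤ bvNorm m var (Lit σ L ω n g) * eLpNorm ψ ∞ m := by grw [bvNorm, ← le_add_self]
    _ ≤ _ := by grw [hdecay g hg hg_mean, hg_bv]

end Decay

theorem ofReal_mul_exp_mul_le {K lam : ℝ} {C : ℝ≥0∞} (hC : C ≠ ∞) (n : ℕ) :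
    ENNReal.ofReal (K * Real.exp (-lam * n)) * C ≤
      ENNReal.ofReal (K * (C.toReal + 1) * Real.exp (-lam) ^ n) := by
  rw [← Real.exp_nat_mul, mul_comm (n : ℝ), mul_right_comm,
    ENNReal.ofReal_mul' (q := C.toReal + 1) (by positivity)]
  gcongr
  calc C = ENNReal.ofReal C.toReal := (ENNReal.ofReal_toReal hC).symm
    _ ≤ ENNReal.ofReal (C.toReal + 1) := by gcongr; linarith

theorem decay_of_correlations_general {Ω X : Type*} [MeasurableSpace Ω] [MeasurableSpace X]
    (P : Measure Ω) (σ : Ω → Ω)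
    (m : Measure X) [IsProbabilityMeasure m] (var : (X → ℝ) → ℝ≥0∞)
    (f : Ω → X → X) (L : Ω → (X → ℝ) → X → ℝ)
    (hvar : VariationGood m var) (hgood : UniformlyGood P σ m var f L)
    (h : Ω → X → ℝ) (hacim : IsACIM P σ m var L h) :
    ∃ K ρ : ℝ, 0 < K ∧ ρ ∈ Set.Ioo (0 : ℝ) 1 ∧
      ∀ (n : ℕ) (ψ φ : X → ℝ), Measurable ψ → eLpNorm ψ ∞ m < ∞ → MemBV m var φ →
        ∀ᵐ ω ∂P,
          ENNReal.ofReal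
              |(∫ x, Lit σ L ω n (fun y => φ y * h ω y) x * ψ x ∂m) -
                (∫ x, φ x ∂(muOmega m h ω)) * ∫ x, ψ x ∂(muOmega m h (σ^[n] ω))| ≤
            ENNReal.ofReal (K * ρ ^ n) * eLpNorm ψ ∞ m * varNorm m var φ := by
  obtain ⟨K₀, lam, hK₀, hlam, hdecay⟩ := hgood.h5
  obtain ⟨Kvar, hKvar_lt, hKvar⟩ := hvar.v7
  obtain ⟨B, hB_lt, hB⟩ := hacim.bdd
  set C := (Kvar + 1) * B
  have hC : C ≠ ∞ := ENNReal.mul_ne_top (by finiteness) hB_lt.ne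
  refine ⟨K₀ * (C.toReal + 1), Real.exp (-lam), by positivity,
    ⟨Real.exp_pos _, Real.exp_lt_one_iff.2 (by linarith)⟩, ?_⟩
  intro n ψ φ hψ hψ_top hφ
  obtain ⟨ψ', hψ'_meas, hψ'_le, hψ'ψ⟩ := exists_measurable_abs_le_ae_eq hψ hψ_top.ne
  have hh_meas : ∀ ω, Measurable (h ω) := fun ω => hacim.meas.comp measurable_prodMk_left
  have hψ'_int : ∀ u : X → ℝ, ∫ x, u x * ψ x ∂m = ∫ x, u x * ψ' x ∂m := fun u =>
    integral_congr_ae (hψ'ψ.mono fun x hx => congrArg (u x * ·) hx.symm)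
  filter_upwards [hdecay, hB, hacim.mem_bv, hacim.mass,
    ae_forall_Lit_ae_eq hgood.sigma_pres hgood.L_congr hacim.equiv]
    with ω hω_decay hω_B hω_bv hω_mass hω_inv
  rw [integral_muOmega (hh_meas ω) (hacim.nonneg ω), integral_muOmega (hh_meas _) (hacim.nonneg _),
    hψ'_int, hψ'_int, ← eLpNorm_congr_ae hψ'ψ, ← Real.enorm_eq_ofReal_abs]
  calc _ ≤ ENNReal.ofReal (K₀ * Real.exp (-lam * n)) *
        ((Kvar + 1) * bvNorm m var (h ω) * varNorm m var φ) * eLpNorm ψ' ∞ m :=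
        enorm_integral_Lit_mul_sub_le hgood.f_meas hgood.L_int hgood.duality hvar hKvar_lt hKvar
          (hω_decay n) hω_bv (.of_forall (hacim.nonneg ω)) hω_mass (hω_inv n) hφ hψ'_meas hψ'_le
    _ ≤ ENNReal.ofReal (K₀ * Real.exp (-lam * n)) * C * varNorm m var φ * eLpNorm ψ' ∞ m := by
        grw [hω_B, ← mul_assoc]
    _ ≤ _ := by
        grw [ofReal_mul_exp_mul_le hC, mul_right_comm _ (varNorm m var φ)]

/-- Lemma on quenched decay of correlations: there are `K > 0` and
`ρ ∈ (0,1)` such that for every `n`, every `ψ ∈ L^∞(X,m)` and every `φ ∈ BV`,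
`|∫ 𝓛_ω^{(n)}(φ h_ω) ψ dm − ∫ φ dμ_ω ⬝ ∫ ψ dμ_{σ^n ω}| ≤ K ρ^n ‖ψ‖_∞ ‖φ‖_var` for a.e. `ω`. -/
theorem decay_of_correlations {Ω X : Type*} [MeasurableSpace Ω] [MeasurableSpace X]
    (P : Measure Ω) [IsProbabilityMeasure P] (σ : Ω → Ω)
    (m : Measure X) [IsProbabilityMeasure m] (var : (X → ℝ) → ℝ≥0∞)
    (f : Ω → X → X) (L : Ω → (X → ℝ) → X → ℝ)
    (hvar : VariationGood m var) (hgood : UniformlyGood P σ m var f L)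
    (h : Ω → X → ℝ) (hacim : IsACIM P σ m var L h) :
    ∃ K ρ : ℝ, 0 < K ∧ ρ ∈ Set.Ioo (0 : ℝ) 1 ∧
      ∀ (n : ℕ) (ψ φ : X → ℝ), Measurable ψ → eLpNorm ψ ∞ m < ∞ → MemBV m var φ →
        ∀ᵐ ω ∂P,
          ENNReal.ofReal
              |(∫ x, Lit σ L ω n (fun y => φ y * h ω y) x * ψ x ∂m) -
                (∫ x, φ x ∂(muOmega m h ω)) * ∫ x, ψ x ∂(muOmega m h (σ^[n] ω))| ≤
            ENNReal.ofReal (K * ρ ^ n) * eLpNorm ψ ∞ m * varNorm m var φ :=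
  decay_of_correlations_general P σ m var f L hvar hgood h hacim

end RandomASIP
end
end

section
/- Let (f_ω)_{ω∈Ω} be a uniformly good family of maps on X, and let c>0 be the constant from hypothesis (H4) corresponding to a value a>0 such that h_ω ∈ C_a for a.e. ω (such a exists since esssup_ω ‖h_ω‖_BV < ∞). Then essinf h_ω ≥ c/2 for ℙ-a.e. ω ∈ Ω. -/
open MeasureTheory Filter ENNReal

noncomputable section

/-! Since `h_ω ∈ C_a` has mass one, (H4) applied to `h_ω` together with the equivariance
`𝓛_ω^{(k)} h_ω = h_{σ^k ω}` gives `essinf h_{σ^k ω} ≥ c/2` for a.e. `ω`, with `k = N n`.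
The set of fibres with `h_ω ≥ c/2` a.e. is measurable, and `σ^k` preserves `ℙ`, so this set
has full measure as soon as its preimage under `σ^k` does. -/

theorem isCoboundedUnder_ge_ae {α : Type*} [MeasurableSpace α] {μ : Measure α} [NeZero μ]
    (f : α → ℝ) : IsCoboundedUnder (· ≥ ·) (ae μ) f := by
  obtain ⟨n, hn⟩ : ∃ n : ℕ, ∃ᵐ x ∂μ, f x ≤ n := by
    by_contra! hlarge
    obtain ⟨x, hx⟩ := (ae_all_iff.2 hlarge).exists
    obtain ⟨n, hn⟩ := exists_nat_ge (f x)
    exact (hx n).not_ge hn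
  exact IsCoboundedUnder.of_frequently_le hn

theorem le_essInf_iff_ae_le {α : Type*} [MeasurableSpace α] {μ : Measure α} [NeZero μ]
    {f : α → ℝ} (hf : IsBoundedUnder (· ≥ ·) (ae μ) f) {c : ℝ} :
    c ≤ essInf f μ ↔ ∀ᵐ x ∂μ, c ≤ f x :=
  ⟨fun hc => (ae_essInf_le hf).mono fun _ hx => hc.trans hx,
    fun hc => le_essInf_of_ae_le c hc (isCoboundedUnder_ge_ae f)⟩

theorem measurableSet_setOf_ae {α β : Type*} [MeasurableSpace α] [MeasurableSpace β]
    (μ : Measure β) [SFinite μ] {p : α → β → Prop}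
    (hp : MeasurableSet {q : α × β | p q.1 q.2}) :
    MeasurableSet {a | ∀ᵐ b ∂μ, p a b} := by
  simp_rw [ae_iff]
  exact measurable_measure_prodMk_left hp.compl (measurableSet_singleton 0)

theorem MeasureTheory.MeasurePreserving.ae_of_ae_comp {α β : Type*}
    [MeasurableSpace α] [MeasurableSpace β]
    {μa : Measure α} {μb : Measure β} {T : α → β} (hT : MeasurePreserving T μa μb)
    {p : β → Prop} (hp : MeasurableSet {y | p y}) (h : ∀ᵐ x ∂μa, p (T x)) :
    ∀ᵐ y ∂μb, p y :=
  hT.map_eq ▸ (ae_map_iff hT.aemeasurable hp).2 h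

namespace RandomASIP

theorem lit_ae_eq_iterate {Ω X : Type*} [MeasurableSpace Ω] [MeasurableSpace X]
    {P : Measure Ω} {σ : Ω → Ω} {m : Measure X} {L : Ω → (X → ℝ) → X → ℝ} {h : Ω → X → ℝ}
    (hσ : MeasurePreserving σ P P)
    (hL : ∀ ω (φ₁ φ₂ : X → ℝ), φ₁ =ᵐ[m] φ₂ → L ω φ₁ =ᵐ[m] L ω φ₂)
    (hinv : ∀ᵐ ω ∂P, L ω (h ω) =ᵐ[m] h (σ ω)) (k : ℕ) :
    ∀ᵐ ω ∂P, Lit σ L ω k (h ω) =ᵐ[m] h (σ^[k] ω) := by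
  induction k with
  | zero => exact .of_forall fun _ => .rfl
  | succ k ih =>
    filter_upwards [ih, (hσ.iterate k).quasiMeasurePreserving.ae hinv] with ω hk hstep
    rw [Function.iterate_succ_apply']
    exact (hL _ _ _ hk).trans hstep

theorem density_lower_bound_general {Ω X : Type*} [MeasurableSpace Ω] [MeasurableSpace X]
    (P : Measure Ω) (σ : Ω → Ω)
    (m : Measure X) [IsProbabilityMeasure m] (var : (X → ℝ) → ℝ≥0∞)
    (f : Ω → X → X) (L : Ω → (X → ℝ) → X → ℝ)
    (hgood : UniformlyGood P σ m var f L)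
    (h : Ω → X → ℝ) (hacim : IsACIM P σ m var L h)
    (a : ℝ) (hcone : ∀ᵐ ω ∂P, h ω ∈ coneC m var a)
    (N n : ℕ) (c : ℝ)
    (hH4 : ∀ᵐ ω ∂P, ∀ g ∈ coneC m var a,
      c / 2 * ∫ x, |g x| ∂m ≤ essInf (Lit σ L ω (N * n) g) m) :
    ∀ᵐ ω ∂P, c / 2 ≤ essInf (h ω) m := by
  have hbdd : ∀ᵐ ω ∂P, IsBoundedUnder (· ≥ ·) (ae m) (h ω) := by
    filter_upwards [hcone] with ω hω using isBoundedUnder_of_eventually_ge hω.2.1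
  have hshift : ∀ᵐ ω ∂P, ∀ᵐ x ∂m, c / 2 ≤ h (σ^[N * n] ω) x := by
    filter_upwards [hH4, hcone, hacim.mass,
      lit_ae_eq_iterate hgood.sigma_pres hgood.L_congr hacim.equiv (N * n),
      (hgood.sigma_pres.iterate (N * n)).quasiMeasurePreserving.ae hbdd]
      with ω hH4ω hcone_ω hmass hlit hbdd_shift
    have habs : ∫ x, |h ω x| ∂m = 1 :=
      (integral_congr_ae (hcone_ω.2.1.mono fun _ hx => abs_of_nonneg hx)).trans hmass
    rw [← le_essInf_iff_ae_le hbdd_shift, ← essInf_congr_ae hlit]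
    simpa only [habs, mul_one] using hH4ω (h ω) hcone_ω
  have hgood_set : MeasurableSet {ω | ∀ᵐ x ∂m, c / 2 ≤ h ω x} :=
    measurableSet_setOf_ae m (measurableSet_le measurable_const hacim.meas)
  filter_upwards [hbdd,
    (hgood.sigma_pres.iterate (N * n)).ae_of_ae_comp hgood_set hshift] with ω hω hlow
  exact (le_essInf_iff_ae_le hω).2 hlow

/-- Lemma: uniform lower bound on the invariant density: if `a > 0` is
such that `h_ω ∈ C_a` for a.e. `ω`, and `c > 0` is the constant from hypothesis (H4)
corresponding to `a` (for some `N, n`), then `essinf h_ω ≥ c/2` for ℙ-a.e. `ω`. -/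
theorem density_lower_bound {Ω X : Type*} [MeasurableSpace Ω] [MeasurableSpace X]
    (P : Measure Ω) [IsProbabilityMeasure P] (σ : Ω → Ω)
    (m : Measure X) [IsProbabilityMeasure m] (var : (X → ℝ) → ℝ≥0∞)
    (f : Ω → X → X) (L : Ω → (X → ℝ) → X → ℝ)
    (hvar : VariationGood m var) (hgood : UniformlyGood P σ m var f L)
    (h : Ω → X → ℝ) (hacim : IsACIM P σ m var L h)
    (a : ℝ) (ha : 0 < a) (hcone : ∀ᵐ ω ∂P, h ω ∈ coneC m var a)
    (N n : ℕ) (hN : 0 < N) (c : ℝ) (hc : 0 < c)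
    (hH4 : ∀ᵐ ω ∂P, ∀ g ∈ coneC m var a,
      c / 2 * ∫ x, |g x| ∂m ≤ essInf (Lit σ L ω (N * n) g) m) :
    ∀ᵐ ω ∂P, c / 2 ≤ essInf (h ω) m :=
  density_lower_bound_general P σ m var f L hgood h hacim a hcone N n c hH4

end RandomASIP
end
end

section
/- For a.e. ω ∈ Ω and every n ≥ 0, 𝔼_ω(M_n ∘ f_ω^n | 𝓣_ω^{n+1}) = 0 μ_ω-almost surely; that is, the sequence (M_n ∘ f_ω^n)_{n≥0} is a reverse martingale difference with respect to the non-increasing filtration (𝓣_ω^n)_{n≥0}. -/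
open MeasureTheory Filter ENNReal

noncomputable section

namespace RandomASIP

/-- Proposition: reverse martingale differences: for a.e. `ω` and every
`n ≥ 0`, `𝔼_ω(M_n ∘ f_ω^n | 𝓣_ω^{n+1}) = 0` `μ_ω`-a.s., i.e. `(M_n ∘ f_ω^n)_n` is a reverse
martingale difference with respect to the non-increasing filtration `(𝓣_ω^n)_n`. -/
theorem reverse_martingale {Ω X : Type*} [MeasurableSpace Ω] [MeasurableSpace X]
    (P : Measure Ω) [IsProbabilityMeasure P] (σ : Ω → Ω)
    (m : Measure X) [IsProbabilityMeasure m] (var : (X → ℝ) → ℝ≥0∞)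
    (f : Ω → X → X) (L : Ω → (X → ℝ) → X → ℝ)
    (hvar : VariationGood m var) (hgood : UniformlyGood P σ m var f L)
    (h : Ω → X → ℝ) (hacim : IsACIM P σ m var L h)
    (c : ℝ) (hc : 0 < c) (hinf : ∀ᵐ ω ∂P, c / 2 ≤ essInf (h ω) m)
    (ψob : Ω → X → ℝ) (hψmeas : Measurable (Function.uncurry ψob))
    (hψbd : ∃ B : ℝ≥0∞, B < ∞ ∧ ∀ ω, bvNorm m var (ψob ω) ≤ B) :
    ∀ᵐ ω ∂P, ∀ n : ℕ,
      (muOmega m h ω)[(fun x => Mseq σ f L h (centered m h ψob) ω n (fIter σ f ω n x)) |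
          Talg σ f ω (n + 1)]
        =ᵐ[muOmega m h ω] 0 := by
  classical
  obtain ⟨Bψ, hBψlt, hψBnorm⟩ := hψbd
  obtain ⟨Cv, hCv1, hv3⟩ := hvar.v3
  -- section measurability
  have hmeas_h : ∀ ω', Measurable (h ω') := fun ω' => hacim.meas.comp measurable_prodMk_left
  have hmeas_ψ : ∀ ω', Measurable (ψob ω') := fun ω' => hψmeas.comp measurable_prodMk_left
  have hmeas_L : ∀ ω' (φ : X → ℝ), Measurable φ → Measurable (L ω' φ) := by
    intro ω' φ hφ
    have h1 := hgood.h1 (fun _ => φ) (hφ.comp measurable_snd)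
    exact h1.comp measurable_prodMk_left
  have hmeas_ψt : ∀ ω', Measurable (centered m h ψob ω') :=
    fun ω' => (hmeas_ψ ω').sub measurable_const
  -- uniform a.e. bound on ψob from BV and (V3)
  set C0 : ℝ := (ENNReal.ofReal Cv * (Bψ + Bψ)).toReal with hC0def
  have hEne : ENNReal.ofReal Cv * (Bψ + Bψ) ≠ ∞ :=
    ENNReal.mul_ne_top ENNReal.ofReal_ne_top (ENNReal.add_ne_top.mpr ⟨hBψlt.ne, hBψlt.ne⟩)
  have hψ_bound : ∀ ω', ∀ᵐ x ∂m, |ψob ω' x| ≤ C0 := by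
    intro ω'
    have hvar' : var (ψob ω') ≤ Bψ := le_trans le_self_add (hψBnorm ω')
    have hl1 : eLpNorm (ψob ω') 1 m ≤ Bψ := le_trans le_add_self (hψBnorm ω')
    have hE : eLpNorm (ψob ω') ⊤ m ≤ ENNReal.ofReal Cv * (Bψ + Bψ) :=
      le_trans (hv3 _) (mul_le_mul_right (add_le_add hl1 hvar') _)
    filter_upwards [ae_le_eLpNormEssSup (f := ψob ω') (μ := m)] with x hx
    have hx2 : (‖ψob ω' x‖₊ : ℝ≥0∞) ≤ ENNReal.ofReal Cv * (Bψ + Bψ) := by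
      refine le_trans hx ?_
      rw [← eLpNorm_exponent_top]
      exact hE
    calc |ψob ω' x| = ((‖ψob ω' x‖₊ : ℝ≥0∞)).toReal := by
          simp [Real.norm_eq_abs]
    _ ≤ C0 := ENNReal.toReal_mono hEne hx2
  -- extract a full-measure set of good fibers
  have hBase : ∀ᵐ ω ∂P, (Integrable (h ω) m ∧ (∫ x, h ω x ∂m) = 1 ∧
      L ω (h ω) =ᵐ[m] h (σ ω) ∧ c / 2 ≤ essInf (h ω) m) := by
    filter_upwards [hacim.mem_bv, hacim.mass, hacim.equiv, hinf] with ω h1 h2 h3 h4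
    exact ⟨h1.1, h2, h3, h4⟩
  have hGood : ∀ᵐ ω ∂P, ∀ k : ℕ, (Integrable (h (σ^[k] ω)) m ∧
      (∫ x, h (σ^[k] ω) x ∂m) = 1 ∧
      L (σ^[k] ω) (h (σ^[k] ω)) =ᵐ[m] h (σ (σ^[k] ω)) ∧
      c / 2 ≤ essInf (h (σ^[k] ω)) m) := by
    rw [ae_all_iff]
    intro k
    exact ((hgood.sigma_pres.iterate k).quasiMeasurePreserving.tendsto_ae).eventually hBase
  filter_upwards [hGood] with ω hω
  -- basic facts along the orbit of ω
  have hint : ∀ k, Integrable (h (σ^[k] ω)) m := fun k => (hω k).1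
  have hmass : ∀ k, (∫ x, h (σ^[k] ω) x ∂m) = 1 := fun k => (hω k).2.1
  have hequiv : ∀ k, L (σ^[k] ω) (h (σ^[k] ω)) =ᵐ[m] h (σ^[k + 1] ω) := by
    intro k
    rw [Function.iterate_succ_apply']
    exact (hω k).2.2.1
  have hpos : ∀ k, ∀ᵐ x ∂m, c / 4 < h (σ^[k] ω) x := by
    intro k
    have hlt : c / 4 < essInf (h (σ^[k] ω)) m :=
      lt_of_lt_of_le (by linarith) (hω k).2.2.2
    exact Filter.eventually_lt_of_lt_liminf hlt
      (Filter.isBoundedUnder_of ⟨0, fun x => hacim.nonneg _ x⟩)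
  have hmeas_G : ∀ k, Measurable (Gseq σ L h (centered m h ψob) ω k) := by
    intro k
    induction k with
    | zero => exact measurable_const
    | succ k ih =>
      exact (hmeas_L _ _ (((hmeas_ψt _).mul (hmeas_h _)).add (ih.mul (hmeas_h _)))).div
        (hmeas_h _)
  have hmeas_fIter : ∀ n, Measurable (fIter σ f ω n) := by
    intro n
    induction n with
    | zero => exact measurable_id
    | succ n ih => exact (hgood.f_meas _).comp ih
  -- probability of the fiber measures
  have hprob : ∀ k, IsProbabilityMeasure (muOmega m h (σ^[k] ω)) := by
    intro k
    constructor
    simp only [muOmega]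
    rw [withDensity_apply _ MeasurableSet.univ, Measure.restrict_univ,
      ← ofReal_integral_eq_lintegral_ofReal (hint k)
        (Filter.Eventually.of_forall fun x => hacim.nonneg _ x),
      hmass k, ENNReal.ofReal_one]
  -- integration against muOmega
  have hIntegralMu : ∀ ω' (g : X → ℝ),
      ∫ x, g x ∂(muOmega m h ω') = ∫ x, g x * h ω' x ∂m := by
    intro ω' g
    have hden : muOmega m h ω' = m.withDensity (fun x => ((h ω' x).toNNReal : ℝ≥0∞)) := rfl
    have hQ : Measurable fun x => (h ω' x).toNNReal := measurable_real_toNNReal.comp (hmeas_h ω')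
    rw [hden, integral_withDensity_eq_integral_smul hQ g]
    refine integral_congr_ae (Filter.Eventually.of_forall fun x => ?_)
    simp [NNReal.smul_def, Real.coe_toNNReal _ (hacim.nonneg ω' x), mul_comm]
  have hIntegrableMu : ∀ ω' (g : X → ℝ),
      Integrable g (muOmega m h ω') ↔ Integrable (fun x => g x * h ω' x) m := by
    intro ω' g
    rw [muOmega, integrable_withDensity_iff ((hmeas_h ω').ennreal_ofReal)
      (Filter.Eventually.of_forall fun x => ENNReal.ofReal_lt_top)]
    refine integrable_congr (Filter.Eventually.of_forall fun x => ?_)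
    show g x * (ENNReal.ofReal (h ω' x)).toReal = g x * h ω' x
    rw [ENNReal.toReal_ofReal (hacim.nonneg ω' x)]
  -- indicator test functions
  have hψB_bd : ∀ (B : Set X) (x : X), |B.indicator (fun _ => (1 : ℝ)) x| ≤ 1 := by
    intro B x
    by_cases hx : x ∈ B
    · simp [Set.indicator_of_mem hx]
    · simp [Set.indicator_of_notMem hx]
  -- one-step change of variables
  have hstep : ∀ k (B : Set X), MeasurableSet B →
      ∫ x, h (σ^[k] ω) x * B.indicator (fun _ => (1 : ℝ)) (f (σ^[k] ω) x) ∂m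
        = ∫ x in B, h (σ^[k + 1] ω) x ∂m := by
    intro k B hB
    have hd := hgood.duality (σ^[k] ω) (h (σ^[k] ω)) (B.indicator (fun _ => (1 : ℝ)))
      (hint k) (measurable_const.indicator hB) ⟨1, hψB_bd B⟩
    refine hd.symm.trans ?_
    rw [← integral_indicator hB]
    refine integral_congr_ae ?_
    filter_upwards [hequiv k] with x hx
    by_cases hxB : x ∈ B
    · simp [hx, Set.indicator_of_mem hxB]
    · simp [Set.indicator_of_notMem hxB]
  -- one-step pushforward of the fiber measures
  have hmap : ∀ k, Measure.map (f (σ^[k] ω)) (muOmega m h (σ^[k] ω))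
      = muOmega m h (σ^[k + 1] ω) := by
    intro k
    ext B hB
    rw [Measure.map_apply (hgood.f_meas _) hB]
    simp only [muOmega]
    rw [withDensity_apply _ (hgood.f_meas _ hB), withDensity_apply _ hB,
      ← ofReal_integral_eq_lintegral_ofReal ((hint k).integrableOn)
        (ae_restrict_of_ae (Filter.Eventually.of_forall fun x => hacim.nonneg _ x)),
      ← ofReal_integral_eq_lintegral_ofReal ((hint (k + 1)).integrableOn)
        (ae_restrict_of_ae (Filter.Eventually.of_forall fun x => hacim.nonneg _ x))]
    congr 1
    rw [← hstep k B hB, ← integral_indicator (hgood.f_meas _ hB)]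
    refine integral_congr_ae ?_
    filter_upwards with x
    by_cases hx : x ∈ f (σ^[k] ω) ⁻¹' B
    · have hx' : f (σ^[k] ω) x ∈ B := hx
      rw [Set.indicator_of_mem hx, Set.indicator_of_mem hx', mul_one]
    · have hx' : f (σ^[k] ω) x ∉ B := hx
      rw [Set.indicator_of_notMem hx, Set.indicator_of_notMem hx', mul_zero]
  -- iterated pushforward
  have hmapIter : ∀ n, Measure.map (fIter σ f ω n) (muOmega m h ω)
      = muOmega m h (σ^[n] ω) := by
    intro n
    induction n with
    | zero =>
      show Measure.map id (muOmega m h ω) = muOmega m h ω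
      exact Measure.map_id
    | succ n ih =>
      have hcomp : fIter σ f ω (n + 1) = (f (σ^[n] ω)) ∘ fIter σ f ω n := rfl
      rw [hcomp, ← Measure.map_map (hgood.f_meas _) (hmeas_fIter n), ih, hmap n]
  -- a.e. bound on the centered observable
  have hψt_bound : ∀ k, ∀ᵐ x ∂m, |centered m h ψob (σ^[k] ω) x| ≤ C0 + C0 := by
    intro k
    haveI := hprob k
    have hbint : |∫ y, ψob (σ^[k] ω) y ∂(muOmega m h (σ^[k] ω))| ≤ C0 := by
      have hb : ∀ᵐ x ∂(muOmega m h (σ^[k] ω)), ‖ψob (σ^[k] ω) x‖ ≤ C0 := by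
        refine Filter.Eventually.filter_mono ((withDensity_absolutelyContinuous m _).ae_le) ?_
        filter_upwards [hψ_bound (σ^[k] ω)] with x hx
        simpa [Real.norm_eq_abs] using hx
      have := norm_integral_le_of_norm_le_const hb
      simpa [Real.norm_eq_abs, measure_univ] using this
    filter_upwards [hψ_bound (σ^[k] ω)] with x hx
    have : centered m h ψob (σ^[k] ω) x
        = ψob (σ^[k] ω) x - ∫ y, ψob (σ^[k] ω) y ∂(muOmega m h (σ^[k] ω)) := rfl
    rw [this]
    rw [abs_le] at hx hbint ⊢
    constructor <;> [linarith [hx.1, hbint.2]; linarith [hx.2, hbint.1]]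
  -- integrability of ψ̃ h
  have hintψh : ∀ k, Integrable
      (fun y => centered m h ψob (σ^[k] ω) y * h (σ^[k] ω) y) m := by
    intro k
    refine (hint k).bdd_mul (c := C0 + C0) ((hmeas_ψt _).aestronglyMeasurable) ?_
    filter_upwards [hψt_bound k] with x hx
    simpa [Real.norm_eq_abs] using hx
  -- integrability of G_k h_k
  have hintG : ∀ k, Integrable
      (fun y => Gseq σ L h (centered m h ψob) ω k y * h (σ^[k] ω) y) m := by
    intro k
    induction k with
    | zero =>
      refine (integrable_zero X ℝ m).congr
        (Filter.Eventually.of_forall fun y => ?_)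
      show (0 : ℝ) = Gseq σ L h (centered m h ψob) ω 0 y * h (σ^[0] ω) y
      have hz : Gseq σ L h (centered m h ψob) ω 0 y = 0 := rfl
      rw [hz, zero_mul]
    | succ k ih =>
      have harg : Integrable (fun y => centered m h ψob (σ^[k] ω) y * h (σ^[k] ω) y
          + Gseq σ L h (centered m h ψob) ω k y * h (σ^[k] ω) y) m := (hintψh k).add ih
      refine (hgood.L_int (σ^[k] ω) _ harg).congr ?_
      filter_upwards [hpos (k + 1)] with x hx
      have hne : h (σ^[k + 1] ω) x ≠ 0 := ne_of_gt (lt_trans (by linarith) hx)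
      have hGx : Gseq σ L h (centered m h ψob) ω (k + 1) x
          = L (σ^[k] ω) (fun y => centered m h ψob (σ^[k] ω) y * h (σ^[k] ω) y
            + Gseq σ L h (centered m h ψob) ω k y * h (σ^[k] ω) y) x / h (σ^[k + 1] ω) x := rfl
      rw [hGx, div_mul_cancel₀ _ hne]
  -- now fix n
  intro n
  haveI : IsProbabilityMeasure (muOmega m h ω) := hprob 0
  have hle : Talg σ f ω (n + 1) ≤ (inferInstance : MeasurableSpace X) :=
    (hmeas_fIter (n + 1)).comap_le
  haveI hfin : IsFiniteMeasure ((muOmega m h ω).trim hle) := by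
    constructor
    rw [trim_measurableSet_eq hle (@MeasurableSet.univ _ (Talg σ f ω (n + 1)))]
    exact measure_lt_top _ _
  haveI : SigmaFinite ((muOmega m h ω).trim hle) := inferInstance
  have hmeas_M : Measurable (Mseq σ f L h (centered m h ψob) ω n) :=
    ((hmeas_ψt _).add (hmeas_G n)).sub ((hmeas_G (n + 1)).comp (hgood.f_meas _))
  -- transfer of integrability through one step
  have htrans : ∀ (Θ : X → ℝ), Measurable Θ →
      (Integrable (fun y => Θ (f (σ^[n] ω) y) * h (σ^[n] ω) y) m ↔
        Integrable (fun x => Θ x * h (σ^[n + 1] ω) x) m) := by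
    intro Θ hΘ
    have h1 := hIntegrableMu (σ^[n] ω) (fun y => Θ (f (σ^[n] ω) y))
    have h2 := hIntegrableMu (σ^[n + 1] ω) Θ
    have h3 : Integrable Θ (muOmega m h (σ^[n + 1] ω)) ↔
        Integrable (fun y => Θ (f (σ^[n] ω) y)) (muOmega m h (σ^[n] ω)) := by
      rw [← hmap n]
      exact integrable_map_measure hΘ.aestronglyMeasurable (hgood.f_meas _).aemeasurable
    exact h1.symm.trans (h3.symm.trans h2)
  -- integrability of M_n ∘ f_ω^n
  have hM_int : Integrable
      (fun x => Mseq σ f L h (centered m h ψob) ω n (fIter σ f ω n x)) (muOmega m h ω) := by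
    have hBt : Integrable (fun y => Gseq σ L h (centered m h ψob) ω (n + 1) (f (σ^[n] ω) y)
        * h (σ^[n] ω) y) m :=
      (htrans (Gseq σ L h (centered m h ψob) ω (n + 1)) (hmeas_G (n + 1))).mpr (hintG (n + 1))
    have h0 : Integrable
        (fun x => Mseq σ f L h (centered m h ψob) ω n x * h (σ^[n] ω) x) m := by
      refine (((hintψh n).add (hintG n)).sub hBt).congr ?_
      filter_upwards with y
      simp only [Pi.add_apply, Pi.sub_apply]
      have hMy : Mseq σ f L h (centered m h ψob) ω n y
          = centered m h ψob (σ^[n] ω) y + Gseq σ L h (centered m h ψob) ω n y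
            - Gseq σ L h (centered m h ψob) ω (n + 1) (f (σ^[n] ω) y) := rfl
      rw [hMy]
      ring
    have h1 : Integrable (Mseq σ f L h (centered m h ψob) ω n) (muOmega m h (σ^[n] ω)) :=
      (hIntegrableMu _ _).mpr h0
    have h2 : Integrable (Mseq σ f L h (centered m h ψob) ω n)
        (Measure.map (fIter σ f ω n) (muOmega m h ω)) := by
      rw [hmapIter n]
      exact h1
    exact (integrable_map_measure hmeas_M.aestronglyMeasurable
      (hmeas_fIter n).aemeasurable).mp h2
  -- the set integrals vanish
  have hset : ∀ s : Set X, MeasurableSet[Talg σ f ω (n + 1)] s →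
      ∫ x in s, Mseq σ f L h (centered m h ψob) ω n (fIter σ f ω n x) ∂(muOmega m h ω) = 0 := by
    intro s hs
    obtain ⟨B, hB, rfl⟩ := hs
    have hindm : Measurable (B.indicator (fun _ => (1 : ℝ))) := measurable_const.indicator hB
    -- e1 : set integral as an integral against the indicator
    have e1 : ∫ x in fIter σ f ω (n + 1) ⁻¹' B,
          Mseq σ f L h (centered m h ψob) ω n (fIter σ f ω n x) ∂(muOmega m h ω)
        = ∫ x, Mseq σ f L h (centered m h ψob) ω n (fIter σ f ω n x)
            * B.indicator (fun _ => (1 : ℝ)) (f (σ^[n] ω) (fIter σ f ω n x))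
            ∂(muOmega m h ω) := by
      rw [← integral_indicator (hmeas_fIter (n + 1) hB)]
      refine integral_congr_ae ?_
      filter_upwards with x
      by_cases hx : x ∈ fIter σ f ω (n + 1) ⁻¹' B
      · have hx' : f (σ^[n] ω) (fIter σ f ω n x) ∈ B := hx
        rw [Set.indicator_of_mem hx, Set.indicator_of_mem hx', mul_one]
      · have hx' : f (σ^[n] ω) (fIter σ f ω n x) ∉ B := hx
        rw [Set.indicator_of_notMem hx, Set.indicator_of_notMem hx', mul_zero]
    -- e2 : push forward along f_ω^n
    have hΦmeas : Measurable (fun y => Mseq σ f L h (centered m h ψob) ω n y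
        * B.indicator (fun _ => (1 : ℝ)) (f (σ^[n] ω) y)) :=
      hmeas_M.mul (hindm.comp (hgood.f_meas _))
    have e2 : ∫ x, Mseq σ f L h (centered m h ψob) ω n (fIter σ f ω n x)
          * B.indicator (fun _ => (1 : ℝ)) (f (σ^[n] ω) (fIter σ f ω n x)) ∂(muOmega m h ω)
        = ∫ y, Mseq σ f L h (centered m h ψob) ω n y
            * B.indicator (fun _ => (1 : ℝ)) (f (σ^[n] ω) y) ∂(muOmega m h (σ^[n] ω)) := by
      rw [← hmapIter n]
      exact (integral_map (hmeas_fIter n).aemeasurable hΦmeas.aestronglyMeasurable).symm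
    -- e3 : to an integral against m
    have e3 : ∫ y, Mseq σ f L h (centered m h ψob) ω n y
          * B.indicator (fun _ => (1 : ℝ)) (f (σ^[n] ω) y) ∂(muOmega m h (σ^[n] ω))
        = ∫ y, (Mseq σ f L h (centered m h ψob) ω n y
            * B.indicator (fun _ => (1 : ℝ)) (f (σ^[n] ω) y)) * h (σ^[n] ω) y ∂m :=
      hIntegralMu _ _
    -- integrability of the two pieces
    have hA_int : Integrable (fun y =>
        (centered m h ψob (σ^[n] ω) y * h (σ^[n] ω) y
          + Gseq σ L h (centered m h ψob) ω n y * h (σ^[n] ω) y)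
        * B.indicator (fun _ => (1 : ℝ)) (f (σ^[n] ω) y)) m := by
      have hmul := ((hintψh n).add (hintG n)).bdd_mul
        ((hindm.comp (hgood.f_meas _)).aestronglyMeasurable)
        (Filter.Eventually.of_forall fun y => by
          simpa [Real.norm_eq_abs] using hψB_bd B (f (σ^[n] ω) y))
      refine hmul.congr ?_
      filter_upwards with y
      simp only [Pi.add_apply, Function.comp_apply]
      ring
    have hBt_int : Integrable (fun y =>
        (Gseq σ L h (centered m h ψob) ω (n + 1) (f (σ^[n] ω) y)
          * B.indicator (fun _ => (1 : ℝ)) (f (σ^[n] ω) y)) * h (σ^[n] ω) y) m := by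
      refine (htrans (fun x => Gseq σ L h (centered m h ψob) ω (n + 1) x
        * B.indicator (fun _ => (1 : ℝ)) x) ((hmeas_G (n + 1)).mul hindm)).mpr ?_
      have hmul := (hintG (n + 1)).bdd_mul (hindm.aestronglyMeasurable)
        (Filter.Eventually.of_forall fun y => by
          simpa [Real.norm_eq_abs] using hψB_bd B y)
      exact hmul.congr (by filter_upwards with y using by ring)
    -- e4 : split the integral
    have e4 : ∫ y, (Mseq σ f L h (centered m h ψob) ω n y
          * B.indicator (fun _ => (1 : ℝ)) (f (σ^[n] ω) y)) * h (σ^[n] ω) y ∂m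
        = (∫ y, (centered m h ψob (σ^[n] ω) y * h (σ^[n] ω) y
              + Gseq σ L h (centered m h ψob) ω n y * h (σ^[n] ω) y)
            * B.indicator (fun _ => (1 : ℝ)) (f (σ^[n] ω) y) ∂m)
          - ∫ y, (Gseq σ L h (centered m h ψob) ω (n + 1) (f (σ^[n] ω) y)
              * B.indicator (fun _ => (1 : ℝ)) (f (σ^[n] ω) y)) * h (σ^[n] ω) y ∂m := by
      rw [← integral_sub hA_int hBt_int]
      refine integral_congr_ae ?_
      filter_upwards with y
      have hMy : Mseq σ f L h (centered m h ψob) ω n y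
          = centered m h ψob (σ^[n] ω) y + Gseq σ L h (centered m h ψob) ω n y
            - Gseq σ L h (centered m h ψob) ω (n + 1) (f (σ^[n] ω) y) := rfl
      rw [hMy]
      ring
    -- e5 : duality for the first piece
    have e5 : ∫ y, (centered m h ψob (σ^[n] ω) y * h (σ^[n] ω) y
          + Gseq σ L h (centered m h ψob) ω n y * h (σ^[n] ω) y)
          * B.indicator (fun _ => (1 : ℝ)) (f (σ^[n] ω) y) ∂m
        = ∫ x, Gseq σ L h (centered m h ψob) ω (n + 1) x * h (σ^[n + 1] ω) x
            * B.indicator (fun _ => (1 : ℝ)) x ∂m := by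
      have hd := hgood.duality (σ^[n] ω)
        (fun y => centered m h ψob (σ^[n] ω) y * h (σ^[n] ω) y
          + Gseq σ L h (centered m h ψob) ω n y * h (σ^[n] ω) y)
        (B.indicator (fun _ => (1 : ℝ)))
        ((hintψh n).add (hintG n)) hindm ⟨1, hψB_bd B⟩
      refine hd.symm.trans (integral_congr_ae ?_)
      filter_upwards [hpos (n + 1)] with x hx
      have hne : h (σ^[n + 1] ω) x ≠ 0 := ne_of_gt (lt_trans (by linarith) hx)
      have hGx : Gseq σ L h (centered m h ψob) ω (n + 1) x
          = L (σ^[n] ω) (fun y => centered m h ψob (σ^[n] ω) y * h (σ^[n] ω) y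
            + Gseq σ L h (centered m h ψob) ω n y * h (σ^[n] ω) y) x / h (σ^[n + 1] ω) x := rfl
      rw [hGx, div_mul_cancel₀ _ hne]
    -- e6 : change of variables for the second piece
    have e6 : ∫ y, (Gseq σ L h (centered m h ψob) ω (n + 1) (f (σ^[n] ω) y)
          * B.indicator (fun _ => (1 : ℝ)) (f (σ^[n] ω) y)) * h (σ^[n] ω) y ∂m
        = ∫ x, Gseq σ L h (centered m h ψob) ω (n + 1) x * h (σ^[n + 1] ω) x
            * B.indicator (fun _ => (1 : ℝ)) x ∂m := by
      have h1 : ∫ y, (Gseq σ L h (centered m h ψob) ω (n + 1) (f (σ^[n] ω) y)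
            * B.indicator (fun _ => (1 : ℝ)) (f (σ^[n] ω) y)) * h (σ^[n] ω) y ∂m
          = ∫ y, Gseq σ L h (centered m h ψob) ω (n + 1) (f (σ^[n] ω) y)
            * B.indicator (fun _ => (1 : ℝ)) (f (σ^[n] ω) y) ∂(muOmega m h (σ^[n] ω)) :=
        (hIntegralMu (σ^[n] ω) (fun y => Gseq σ L h (centered m h ψob) ω (n + 1) (f (σ^[n] ω) y)
          * B.indicator (fun _ => (1 : ℝ)) (f (σ^[n] ω) y))).symm
      have h2 : ∫ y, Gseq σ L h (centered m h ψob) ω (n + 1) (f (σ^[n] ω) y)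
            * B.indicator (fun _ => (1 : ℝ)) (f (σ^[n] ω) y) ∂(muOmega m h (σ^[n] ω))
          = ∫ x, Gseq σ L h (centered m h ψob) ω (n + 1) x
            * B.indicator (fun _ => (1 : ℝ)) x ∂(muOmega m h (σ^[n + 1] ω)) := by
        rw [← hmap n]
        exact (integral_map (hgood.f_meas _).aemeasurable
          (((hmeas_G (n + 1)).mul hindm).aestronglyMeasurable)).symm
      have h3 : ∫ x, Gseq σ L h (centered m h ψob) ω (n + 1) x
            * B.indicator (fun _ => (1 : ℝ)) x ∂(muOmega m h (σ^[n + 1] ω))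
          = ∫ x, (Gseq σ L h (centered m h ψob) ω (n + 1) x
            * B.indicator (fun _ => (1 : ℝ)) x) * h (σ^[n + 1] ω) x ∂m :=
        hIntegralMu _ _
      rw [h1, h2, h3]
      exact integral_congr_ae (by filter_upwards with x using by ring)
    calc ∫ x in fIter σ f ω (n + 1) ⁻¹' B,
          Mseq σ f L h (centered m h ψob) ω n (fIter σ f ω n x) ∂(muOmega m h ω)
        = _ := e1
      _ = _ := e2
      _ = _ := e3
      _ = _ := e4
      _ = 0 := by rw [e5, e6, sub_self]
  -- conclude with uniqueness of conditional expectation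
  refine (ae_eq_condExp_of_forall_setIntegral_eq hle hM_int
    (fun s _ _ => integrableOn_zero) (fun s hs _ => ?_) ?_).symm
  · rw [hset s hs]
    simp
  · exact StronglyMeasurable.aestronglyMeasurable
      (@stronglyMeasurable_const _ _ (Talg σ f ω (n + 1)) _ 0)

end RandomASIP
end
end

section
/- Let φ, ψ ∈ C_a with ∫φ dm = ∫ψ dm = 1. Then ‖φ − ψ‖_BV ≤ 2(1+a) Θ_a(φ, ψ). -/
/-!
If `λφ ⪯ ψ`, integrating gives `λ ≤ 1`, and `χ = ψ - λφ ∈ C_a` has mass `1 - λ`.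
Writing `φ - ψ = (1 - λ)φ - χ` bounds `var (φ - ψ)` by `2a(1 - λ)` and `‖φ - ψ‖₁`
by `2(1 - λ)`, so `‖φ - ψ‖_BV ≤ 2(1 + a)(1 - Ξ)`. Similarly `Υ ≥ 1`, hence
`Θ ≥ log Ξ⁻¹ ≥ 1 - Ξ`.
-/

open MeasureTheory ENNReal

noncomputable section

namespace HilbertCone

variable {X : Type*} [MeasurableSpace X]

/-- The cone `C_a = {φ ∈ BV : φ ≥ 0 and var(φ) ≤ a ∫ φ dm}`. -/
def coneC (m : Measure X) (var : (X → ℝ) → ℝ≥0∞) (a : ℝ) : Set (X → ℝ) :=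
  {φ | Integrable φ m ∧ var φ < ∞ ∧ 0 ≤ᵐ[m] φ ∧
    var φ ≤ ENNReal.ofReal (a * ∫ x, φ x ∂m)}

/-- The partial order `φ ⪯ ψ` iff `ψ − φ ∈ C_a ∪ {0}`. -/
def preceq (m : Measure X) (var : (X → ℝ) → ℝ≥0∞) (a : ℝ) (φ ψ : X → ℝ) : Prop :=
  ψ - φ ∈ coneC m var a ∨ ψ - φ = 0

/-- `Ξ(φ,ψ) = sup {λ ∈ ℝ⁺ : λφ ⪯ ψ}` (equal to `0` if the set is empty). -/
def Xi (m : Measure X) (var : (X → ℝ) → ℝ≥0∞) (a : ℝ) (φ ψ : X → ℝ) : ℝ≥0∞ :=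
  ⨆ (l : ℝ) (_ : 0 < l ∧ preceq m var a (l • φ) ψ), ENNReal.ofReal l

/-- `Υ(φ,ψ) = inf {μ ∈ ℝ⁺ : ψ ⪯ μφ}` (equal to `∞` if the set is empty). -/
def Upsilon (m : Measure X) (var : (X → ℝ) → ℝ≥0∞) (a : ℝ) (φ ψ : X → ℝ) : ℝ≥0∞ :=
  ⨅ (u : ℝ) (_ : 0 < u ∧ preceq m var a ψ (u • φ)), ENNReal.ofReal u

/-- The Hilbert projective (pseudo-)metric `Θ_a(φ,ψ) = log (Υ(φ,ψ) / Ξ(φ,ψ))`. -/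
def Theta (m : Measure X) (var : (X → ℝ) → ℝ≥0∞) (a : ℝ) (φ ψ : X → ℝ) : EReal :=
  ENNReal.log (Upsilon m var a φ ψ / Xi m var a φ ψ)

/-- `‖φ‖_BV = var(φ) + ‖φ‖₁`. -/
def bvNorm (m : Measure X) (var : (X → ℝ) → ℝ≥0∞) (φ : X → ℝ) : ℝ≥0∞ :=
  var φ + eLpNorm φ 1 m

theorem _root_.ENNReal.one_sub_le_neg_log {x : ℝ≥0∞} (hx : x ≤ 1) :
    ((1 - x : ℝ≥0∞) : EReal) ≤ -ENNReal.log x := by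
  rcases eq_or_ne x 0 with rfl | hx0
  · simp
  have hx_top : x ≠ ∞ := ne_top_of_le_ne_top one_ne_top hx
  have hr_pos : 0 < x.toReal := ENNReal.toReal_pos hx0 hx_top
  rw [← ENNReal.ofReal_toReal hx_top, ENNReal.log_ofReal_of_pos hr_pos, ← ENNReal.ofReal_one,
    ← ENNReal.ofReal_sub _ ENNReal.toReal_nonneg, EReal.coe_ennreal_ofReal,
    max_eq_left (sub_nonneg.mpr (ENNReal.toReal_le_of_le_ofReal zero_le_one (by simpa using hx)))]
  have hlog : 1 - x.toReal ≤ -Real.log x.toReal := by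
    linarith [Real.log_le_sub_one_of_pos hr_pos]
  exact_mod_cast hlog

theorem _root_.ENNReal.one_sub_le_log_div {x u : ℝ≥0∞} (hx : x ≤ 1) (hu : 1 ≤ u) :
    ((1 - x : ℝ≥0∞) : EReal) ≤ ENNReal.log (u / x) :=
  calc ((1 - x : ℝ≥0∞) : EReal) ≤ -ENNReal.log x := ENNReal.one_sub_le_neg_log hx
    _ = ENNReal.log x⁻¹ := ENNReal.log_inv.symm
    _ ≤ ENNReal.log (u / x) := ENNReal.log_le_log <| by
        simpa [div_eq_mul_inv] using mul_le_mul_left hu x⁻¹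

variable {m : Measure X} {var : (X → ℝ) → ℝ≥0∞} {a : ℝ} {φ ψ : X → ℝ}

theorem integral_le_integral_of_preceq {f g : X → ℝ} (hf : Integrable f m)
    (h : preceq m var a f g) : ∫ x, f x ∂m ≤ ∫ x, g x ∂m := by
  rcases h with hcone | heq
  · have hnonneg : 0 ≤ ∫ x, (g - f) x ∂m := integral_nonneg_of_ae hcone.2.2.1
    have hsplit : g = f + (g - f) := (add_sub_cancel f g).symm
    rw [hsplit, integral_add' hf hcone.1]
    linarith
  · rw [sub_eq_zero.mp heq]

theorem integral_smul_of_integral_eq_one (hφ1 : ∫ x, φ x ∂m = 1) (l : ℝ) :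
    ∫ x, (l • φ) x ∂m = l := by
  simp [integral_const_mul, hφ1]

theorem le_one_of_smul_preceq (hφ : Integrable φ m) (hφ1 : ∫ x, φ x ∂m = 1)
    (hψ1 : ∫ x, ψ x ∂m = 1) {l : ℝ} (h : preceq m var a (l • φ) ψ) : l ≤ 1 := by
  have h_int := integral_le_integral_of_preceq (hφ.smul l) h
  rwa [integral_smul_of_integral_eq_one hφ1, hψ1] at h_int

theorem one_le_of_preceq_smul (hψ : Integrable ψ m) (hφ1 : ∫ x, φ x ∂m = 1)
    (hψ1 : ∫ x, ψ x ∂m = 1) {u : ℝ} (h : preceq m var a ψ (u • φ)) : 1 ≤ u := by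
  have h_int := integral_le_integral_of_preceq hψ h
  rwa [integral_smul_of_integral_eq_one hφ1, hψ1] at h_int

theorem Xi_le_one (hφ : Integrable φ m) (hφ1 : ∫ x, φ x ∂m = 1)
    (hψ1 : ∫ x, ψ x ∂m = 1) : Xi m var a φ ψ ≤ 1 :=
  iSup₂_le fun _ hl => ENNReal.ofReal_le_one.mpr (le_one_of_smul_preceq hφ hφ1 hψ1 hl.2)

theorem one_le_Upsilon (hψ : Integrable ψ m) (hφ1 : ∫ x, φ x ∂m = 1)
    (hψ1 : ∫ x, ψ x ∂m = 1) : 1 ≤ Upsilon m var a φ ψ :=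
  le_iInf₂ fun _ hu => ENNReal.one_le_ofReal.mpr (one_le_of_preceq_smul hψ hφ1 hψ1 hu.2)

theorem integral_sub_smul_of_integral_eq_one (hφ : Integrable φ m) (hψ : Integrable ψ m)
    (hφ1 : ∫ x, φ x ∂m = 1) (hψ1 : ∫ x, ψ x ∂m = 1) (l : ℝ) :
    ∫ x, (ψ - l • φ) x ∂m = 1 - l := by
  rw [integral_sub' hψ (hφ.smul l), integral_smul_of_integral_eq_one hφ1, hψ1]

theorem eLpNorm_one_eq_ofReal_integral {f : X → ℝ} (hf : Integrable f m) (h0 : 0 ≤ᵐ[m] f) :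
    eLpNorm f 1 m = ENNReal.ofReal (∫ x, f x ∂m) := by
  rw [eLpNorm_one_eq_lintegral_enorm, ofReal_integral_eq_lintegral_ofReal hf h0]
  refine lintegral_congr_ae ?_
  filter_upwards [h0] with x hx using Real.enorm_of_nonneg hx

theorem var_sub_le_of_sub_smul_mem_coneC
    (hv1 : ∀ (t : ℝ) (h : X → ℝ), var (fun x => t * h x) = ENNReal.ofReal |t| * var h)
    (hv2 : ∀ g h : X → ℝ, var (g + h) ≤ var g + var h)
    (hφ : φ ∈ coneC m var a) (hψ : Integrable ψ m) (hφ1 : ∫ x, φ x ∂m = 1)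
    (hψ1 : ∫ x, ψ x ∂m = 1) {l : ℝ} (hl : l ≤ 1) (hχ : ψ - l • φ ∈ coneC m var a) :
    var (φ - ψ) ≤ ENNReal.ofReal (2 * a * (1 - l)) := by
  set χ := ψ - l • φ
  have hvφ : var φ ≤ ENNReal.ofReal a := by simpa [hφ1] using hφ.2.2.2
  have hvχ : var χ ≤ ENNReal.ofReal (a * (1 - l)) :=
    hχ.2.2.2.trans_eq (by rw [integral_sub_smul_of_integral_eq_one hφ.1 hψ hφ1 hψ1])
  have hsplit : φ - ψ = (fun x => (1 - l) * φ x) + fun x => (-1) * χ x := by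
    ext x; simp only [Pi.add_apply, Pi.sub_apply, Pi.smul_apply, smul_eq_mul, χ]; ring
  calc var (φ - ψ) ≤ var (fun x => (1 - l) * φ x) + var (fun x => (-1) * χ x) :=
        hsplit ▸ hv2 _ _
    _ = ENNReal.ofReal (1 - l) * var φ + var χ := by
        rw [hv1, hv1, abs_of_nonneg (sub_nonneg.mpr hl), abs_neg, abs_one, ofReal_one, one_mul]
    _ ≤ ENNReal.ofReal (1 - l) * ENNReal.ofReal a + ENNReal.ofReal (a * (1 - l)) := by gcongr
    _ = ENNReal.ofReal (2 * a * (1 - l)) := by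
        rw [← ENNReal.ofReal_mul (sub_nonneg.mpr hl), mul_comm (1 - l), ← two_mul,
          mul_assoc, ENNReal.ofReal_mul zero_le_two, ENNReal.ofReal_ofNat]

theorem eLpNorm_sub_le_of_sub_smul_mem_coneC
    (hφ : φ ∈ coneC m var a) (hψ : Integrable ψ m) (hφ1 : ∫ x, φ x ∂m = 1)
    (hψ1 : ∫ x, ψ x ∂m = 1) {l : ℝ} (hl : l ≤ 1) (hχ : ψ - l • φ ∈ coneC m var a) :
    eLpNorm (φ - ψ) 1 m ≤ ENNReal.ofReal (2 * (1 - l)) := by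
  set χ := ψ - l • φ
  have hsplit : φ - ψ = (1 - l) • φ - χ := by
    ext x; simp only [Pi.sub_apply, Pi.smul_apply, smul_eq_mul, χ]; ring
  calc eLpNorm (φ - ψ) 1 m ≤ eLpNorm ((1 - l) • φ) 1 m + eLpNorm χ 1 m :=
        hsplit ▸ eLpNorm_sub_le (hφ.1.aestronglyMeasurable.const_smul _)
          hχ.1.aestronglyMeasurable le_rfl
    _ = ENNReal.ofReal (1 - l) * ENNReal.ofReal 1 + ENNReal.ofReal (1 - l) := by
        rw [eLpNorm_const_smul, Real.enorm_of_nonneg (sub_nonneg.mpr hl),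
          eLpNorm_one_eq_ofReal_integral hφ.1 hφ.2.2.1, hφ1,
          eLpNorm_one_eq_ofReal_integral hχ.1 hχ.2.2.1,
          integral_sub_smul_of_integral_eq_one hφ.1 hψ hφ1 hψ1]
    _ = ENNReal.ofReal (2 * (1 - l)) := by
        rw [ENNReal.ofReal_one, mul_one, ← two_mul, ENNReal.ofReal_mul zero_le_two,
          ENNReal.ofReal_ofNat]

theorem bvNorm_sub_le_of_smul_preceq
    (hv1 : ∀ (t : ℝ) (h : X → ℝ), var (fun x => t * h x) = ENNReal.ofReal |t| * var h)
    (hv2 : ∀ g h : X → ℝ, var (g + h) ≤ var g + var h) (ha : 0 ≤ a)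
    (hφ : φ ∈ coneC m var a) (hψ : Integrable ψ m) (hφ1 : ∫ x, φ x ∂m = 1)
    (hψ1 : ∫ x, ψ x ∂m = 1) {l : ℝ} (h : preceq m var a (l • φ) ψ) :
    bvNorm m var (φ - ψ) ≤ ENNReal.ofReal (2 * (1 + a) * (1 - l)) := by
  have hl : l ≤ 1 := le_one_of_smul_preceq hφ.1 hφ1 hψ1 h
  rcases h with hχ | hχ
  · calc bvNorm m var (φ - ψ)
        ≤ ENNReal.ofReal (2 * a * (1 - l)) + ENNReal.ofReal (2 * (1 - l)) :=
          add_le_add (var_sub_le_of_sub_smul_mem_coneC hv1 hv2 hφ hψ hφ1 hψ1 hl hχ)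
            (eLpNorm_sub_le_of_sub_smul_mem_coneC hφ hψ hφ1 hψ1 hl hχ)
      _ = ENNReal.ofReal (2 * (1 + a) * (1 - l)) := by
          rw [← ENNReal.ofReal_add (by positivity) (by positivity)]; ring_nf
  · have hψ_eq : ψ = l • φ := sub_eq_zero.mp hχ
    have hl1 : l = 1 := by rw [← integral_smul_of_integral_eq_one hφ1 l, ← hψ_eq, hψ1]
    have hvar_zero : var 0 = 0 := by simpa [Pi.zero_def] using hv1 0 0
    simp [bvNorm, hψ_eq, hl1, hvar_zero]

theorem bvNorm_sub_le_mul_one_sub_Xi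
    (hv1 : ∀ (t : ℝ) (h : X → ℝ), var (fun x => t * h x) = ENNReal.ofReal |t| * var h)
    (hv2 : ∀ g h : X → ℝ, var (g + h) ≤ var g + var h) (ha : 0 ≤ a)
    (hφ : φ ∈ coneC m var a) (hψ : ψ ∈ coneC m var a) (hφ1 : ∫ x, φ x ∂m = 1)
    (hψ1 : ∫ x, ψ x ∂m = 1) :
    bvNorm m var (φ - ψ) ≤ ENNReal.ofReal (2 * (1 + a)) * (1 - Xi m var a φ ψ) := by
  have key := fun l => bvNorm_sub_le_of_smul_preceq (l := l) hv1 hv2 ha hφ hψ.1 hφ1 hψ1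
  rcases isEmpty_or_nonempty {l : ℝ // 0 < l ∧ preceq m var a (l • φ) ψ} with hempty | hne
  · have hXi : Xi m var a φ ψ = 0 :=
      le_antisymm (iSup₂_le fun l hl => (hempty.false ⟨l, hl⟩).elim) bot_le
    -- `l = 0` is not in the range of `Ξ`, but `0 • φ ⪯ ψ` still holds
    simpa [hXi] using key 0 (Or.inl (by simpa using hψ))
  · rw [Xi, iSup_subtype', ENNReal.sub_iSup ENNReal.one_ne_top,
      ENNReal.mul_iInf_of_ne (ENNReal.ofReal_pos.mpr (by linarith)).ne' ENNReal.ofReal_ne_top]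
    refine le_iInf fun ⟨l, hl0, hl⟩ => (key l hl).trans_eq ?_
    rw [ENNReal.ofReal_mul (by positivity), ← ENNReal.ofReal_one,
      ENNReal.ofReal_sub _ hl0.le]

theorem bv_le_hilbert_metric_general (m : Measure X)
    (var : (X → ℝ) → ℝ≥0∞)
    (hv1 : ∀ (t : ℝ) (h : X → ℝ), var (fun x => t * h x) = ENNReal.ofReal |t| * var h)
    (hv2 : ∀ g h : X → ℝ, var (g + h) ≤ var g + var h)
    (a : ℝ) (ha : 0 < a) (φ ψ : X → ℝ)
    (hφ : φ ∈ coneC m var a) (hψ : ψ ∈ coneC m var a)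
    (hφ1 : (∫ x, φ x ∂m) = 1) (hψ1 : (∫ x, ψ x ∂m) = 1) :
    ((bvNorm m var (φ - ψ) : ℝ≥0∞) : EReal) ≤
      ((2 * (1 + a) : ℝ) : EReal) * Theta m var a φ ψ := by
  have hc : (0 : ℝ) ≤ 2 * (1 + a) := by positivity
  calc ((bvNorm m var (φ - ψ) : ℝ≥0∞) : EReal)
      ≤ ((ENNReal.ofReal (2 * (1 + a)) * (1 - Xi m var a φ ψ) : ℝ≥0∞) : EReal) :=
        EReal.coe_ennreal_le_coe_ennreal_iff.mpr
          (bvNorm_sub_le_mul_one_sub_Xi hv1 hv2 ha.le hφ hψ hφ1 hψ1)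
    _ = ((2 * (1 + a) : ℝ) : EReal) * ((1 - Xi m var a φ ψ : ℝ≥0∞) : EReal) := by
        rw [EReal.coe_ennreal_mul, EReal.coe_ennreal_ofReal, max_eq_left hc]
    _ ≤ ((2 * (1 + a) : ℝ) : EReal) * Theta m var a φ ψ :=
        mul_le_mul_of_nonneg_left
          (ENNReal.one_sub_le_log_div (Xi_le_one hφ.1 hφ1 hψ1) (one_le_Upsilon hψ.1 hφ1 hψ1))
          (EReal.coe_nonneg.mpr hc)

/-- Lemma A.2: the BV norm is controlled by the Hilbert metric:
if `φ, ψ ∈ C_a` with `∫ φ dm = ∫ ψ dm = 1`, then `‖φ − ψ‖_BV ≤ 2(1+a) Θ_a(φ, ψ)`. -/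
theorem bv_le_hilbert_metric (m : Measure X) [IsProbabilityMeasure m]
    (var : (X → ℝ) → ℝ≥0∞)
    (hv1 : ∀ (t : ℝ) (h : X → ℝ), var (fun x => t * h x) = ENNReal.ofReal |t| * var h)
    (hv2 : ∀ g h : X → ℝ, var (g + h) ≤ var g + var h)
    (a : ℝ) (ha : 0 < a) (φ ψ : X → ℝ)
    (hφ : φ ∈ coneC m var a) (hψ : ψ ∈ coneC m var a)
    (hφ1 : (∫ x, φ x ∂m) = 1) (hψ1 : (∫ x, ψ x ∂m) = 1) :
    ((bvNorm m var (φ - ψ) : ℝ≥0∞) : EReal) ≤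
      ((2 * (1 + a) : ℝ) : EReal) * Theta m var a φ ψ :=
  bv_le_hilbert_metric_general m var hv1 hv2 a ha φ ψ hφ hψ hφ1 hψ1

end HilbertCone
end
end
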